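/- arXiv:2005.06285 — 3 statements merged into one kernel-verified Lean document; each statement's English description precedes it below -/
import Mathlib

section
/- For every pushdown system P = (Q, Γ, A, Δ) in push-pop normal form, setting E = |P|^{|P|⁴+1}: whenever pα →* qβ for two configurations pα, qβ of P, then Dist(pα, qβ) ≤ (|α| + |β|) · E. -/
/-- Stack contents: finite (a list in `Γ*`) or infinite (a stream, used for `αβ^ω`). -/
def SC (Γ : Type) : Type := List Γ ⊕ Stream' Γ

namespace SC

/-- Put one symbol on top of a stack content. -/
def cons {Γ : Type} (X : Γ) : SC Γ → SC Γ
  | Sum.inl l => Sum.inl (X :: l)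
  | Sum.inr s => Sum.inr (Stream'.cons X s)

/-- Put a finite word on top of a stack content. -/
def push {Γ : Type} (γ : List Γ) : SC Γ → SC Γ
  | Sum.inl l => Sum.inl (γ ++ l)
  | Sum.inr s => Sum.inr (Stream'.appendStream' γ s)

end SC

/-- `listPow β i = β^i`, the `i`-fold concatenation of `β`. -/
def listPow {Γ : Type} (β : List Γ) : ℕ → List Γ
  | 0 => []
  | n + 1 => β ++ listPow β n

/-- The infinite stack content `β^ω` (for nonempty `β`). -/
def cycSC {Γ : Type} (β : List Γ) (h : β ≠ []) : SC Γ := Sum.inr (Stream'.cycle β h)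

/-- A pushdown system, given by its (finite) transition relation
`Δ ⊆ Q × Γ × A × Q × Γ*`. -/
structure PDS (Q Γ A : Type) where
  Δ : Finset (Q × Γ × A × Q × List Γ)

namespace PDS

variable {Q Γ A : Type}

/-- The size `|P| = |Q| + |Γ| + |A| + |Δ|` of a pushdown system. -/
def size (P : PDS Q Γ A) [Fintype Q] [Fintype Γ] [Fintype A] : ℕ :=
  Fintype.card Q + Fintype.card Γ + Fintype.card A + P.Δ.card

/-- Push-pop normal form: every transition pushes a word of length at most 2. -/
def PushPop (P : PDS Q Γ A) : Prop := ∀ δ ∈ P.Δ, δ.2.2.2.2.length ≤ 2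

/-- The `a`-labeled step relation on configurations: `pXσ →_a qγσ`. -/
def Step (P : PDS Q Γ A) (a : A) (s t : Q × SC Γ) : Prop :=
  ∃ p X q γ σ, (p, X, a, q, γ) ∈ P.Δ ∧ s = (p, SC.cons X σ) ∧ t = (q, SC.push γ σ)

/-- A step with some label. -/
def StepAny (P : PDS Q Γ A) (s t : Q × SC Γ) : Prop := ∃ a, P.Step a s t

/-- Reachability `→*`. -/
def Reach (P : PDS Q Γ A) : (Q × SC Γ) → (Q × SC Γ) → Prop :=
  Relation.ReflTransGen P.StepAny

/-- `StepN P n s t` : there is a path of length exactly `n` from `s` to `t`. -/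
def StepN (P : PDS Q Γ A) : ℕ → (Q × SC Γ) → (Q × SC Γ) → Prop
  | 0, s, t => s = t
  | n + 1, s, t => ∃ u, P.StepAny s u ∧ StepN P n u t

/-- `R` is a bisimulation. -/
def IsBisim (P : PDS Q Γ A) (R : (Q × SC Γ) → (Q × SC Γ) → Prop) : Prop :=
  ∀ s t, R s t → ∀ a,
    (∀ s', P.Step a s s' → ∃ t', P.Step a t t' ∧ R s' t') ∧
    (∀ t', P.Step a t t' → ∃ s', P.Step a s s' ∧ R s' t')

/-- Bisimilarity `s ∼ t`. -/
def Bisim (P : PDS Q Γ A) (s t : Q × SC Γ) : Prop := ∃ R, P.IsBisim R ∧ R s t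

/-- `eats_α(T) = { r | ∃ q ∈ T, qα →* r }`. -/
def eats (P : PDS Q Γ A) (α : List Γ) (T : Set Q) : Set Q :=
  {r | ∃ q ∈ T, P.Reach (q, Sum.inl α) (r, Sum.inl ([] : List Γ))}

/-- `(α, β)` (with `β` nonempty) is a linked pair if `eats_α = eats_{αβ}`
and `eats_β = eats_{ββ}`. -/
def LinkedPair (P : PDS Q Γ A) (α β : List Γ) : Prop :=
  β ≠ [] ∧ P.eats α = P.eats (α ++ β) ∧ P.eats β = P.eats (β ++ β)

/-- Applying one concrete transition `δ = (p, X, a, q, γ)`. -/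
def TStep (P : PDS Q Γ A) (δ : Q × Γ × A × Q × List Γ) (s t : Q × SC Γ) : Prop :=
  δ ∈ P.Δ ∧ ∃ σ, s = (δ.1, SC.cons δ.2.1 σ) ∧ t = (δ.2.2.2.1, SC.push δ.2.2.2.2 σ)

/-- `RunTo P ρ s t` : applying the sequence of transitions `ρ` starting from `s`
yields `t`. -/
def RunTo (P : PDS Q Γ A) : List (Q × Γ × A × Q × List Γ) → (Q × SC Γ) → (Q × SC Γ) → Prop
  | [], s, t => s = t
  | δ :: ρ, s, t => ∃ u, P.TStep δ s u ∧ RunTo P ρ u t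

/-- Bisimulation classes of configurations reachable from `s₀`
(the states of the bisimulation quotient of `L(P, s₀)`). -/
def classes (P : PDS Q Γ A) (s₀ : Q × SC Γ) : Set (Set (Q × SC Γ)) :=
  {c | ∃ s, P.Reach s₀ s ∧ c = {t | P.Reach s₀ t ∧ P.Bisim s t}}

/-- The `a`-labeled step relation on bisimulation classes. -/
def classStep (P : PDS Q Γ A) (a : A) (c d : Set (Q × SC Γ)) : Prop :=
  ∃ s ∈ c, ∃ t ∈ d, P.Step a s t

end PDS

/-- `StackGrowth` of a single transition: `|γ| − 1`. -/
def tGrowth {Q Γ A : Type} (δ : Q × Γ × A × Q × List Γ) : ℤ := (δ.2.2.2.2.length : ℤ) - 1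

/-- `StackGrowth` of a run. -/
def runGrowth {Q Γ A : Type} (ρ : List (Q × Γ × A × Q × List Γ)) : ℤ := (ρ.map tGrowth).sum

/-- A run is augmenting if every prefix has nonnegative stack growth. -/
def Augmenting {Q Γ A : Type} (ρ : List (Q × Γ × A × Q × List Γ)) : Prop :=
  ∀ i ≤ ρ.length, 0 ≤ runGrowth (ρ.take i)

/-- A digging sequence `(r 0, …, r h)` for `(q, α, β)`. -/
def DiggingSeq {Q Γ A : Type} (P : PDS Q Γ A) (q : Q) (α β : List Γ)
    (h : ℕ) (r : ℕ → Q) : Prop :=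
  r 0 ∈ P.eats α {q} ∧ ∀ d, 1 ≤ d → d ≤ h → r d ∈ P.eats β {r (d - 1)}

/-- A `β^ω`-avoiding digging sequence `(r 0, …, r h)` for `(q, α, β)`,
with respect to the configuration `qαβ^eγ` (where `e ≥ 1`). -/
def Avoiding {Q Γ A : Type} (P : PDS Q Γ A) (q : Q) (α β γ : List Γ) (hβ : β ≠ [])
    (e h : ℕ) (r : ℕ → Q) : Prop :=
  DiggingSeq P q α β h r ∧
  (∃ r' ∈ P.eats β {r 0},
      ¬ P.Bisim (r', Sum.inl (listPow β (e - 1) ++ γ)) (r', cycSC β hβ)) ∧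
  ∀ d, 1 ≤ d → d ≤ h →
    ¬ P.Bisim (r d, Sum.inl (listPow β (e - d) ++ γ)) (r d, cycSC β hβ)

/-- The class of elementary functions `ℕ^k → ℕ`: the smallest class containing
constants, projections, addition, multiplication and exponentiation, and closed
under composition. -/
inductive ElementaryFun : {k : ℕ} → ((Fin k → ℕ) → ℕ) → Prop
  | const {k : ℕ} (c : ℕ) : ElementaryFun (fun _ : Fin k → ℕ => c)
  | proj {k : ℕ} (i : Fin k) : ElementaryFun (fun v : Fin k → ℕ => v i)
  | add : ElementaryFun (fun v : Fin 2 → ℕ => v 0 + v 1)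
  | mul : ElementaryFun (fun v : Fin 2 → ℕ => v 0 * v 1)
  | exp : ElementaryFun (fun v : Fin 2 → ℕ => v 0 ^ v 1)
  | comp {k m : ℕ} (f : (Fin m → ℕ) → ℕ) (g : Fin m → (Fin k → ℕ) → ℕ) :
      ElementaryFun f → (∀ i, ElementaryFun (g i)) →
      ElementaryFun (fun v : Fin k → ℕ => f (fun i => g i v))

/-- A binary function `ℕ² → ℕ` is elementary. -/
def Elementary2 (φ : ℕ → ℕ → ℕ) : Prop :=
  ElementaryFun (fun v : Fin 2 → ℕ => φ (v 0) (v 1))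

/-- A ternary function `ℕ³ → ℕ` is elementary. -/
def Elementary3 (φ : ℕ → ℕ → ℕ → ℕ) : Prop :=
  ElementaryFun (fun v : Fin 3 → ℕ => φ (v 0) (v 1) (v 2))

/-- `prodSeg w i len = w (i+1) * w (i+2) * ⋯ * w (i+len+1)` in a semigroup. -/
def prodSeg {S : Type} [Semigroup S] (w : ℕ → S) (i : ℕ) : ℕ → S
  | 0 => w (i + 1)
  | len + 1 => prodSeg w i len * w (i + len + 2)

/-- `catSeg α i len = α (i+1) ++ α (i+2) ++ ⋯ ++ α (i+len+1)`. -/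
def catSeg {Γ : Type} (α : ℕ → List Γ) (i : ℕ) : ℕ → List Γ
  | 0 => α (i + 1)
  | len + 1 => catSeg α i len ++ α (i + len + 2)

/-!
Let `N = |Q × Γ × Q|`. A shortest run popping one symbol applies a rule pushing at most two
symbols and then pops these one after the other by strictly shorter runs, so its length is at most
`1 + 2b` when `b` bounds the shorter pop distances; ordering the triples `(p, X, r)` by distance
gives the bound `2^N - 1`. Likewise a shortest run between one-symbol stacks is a chain of at most
`|Q × Γ|` segments, each a step or a push followed by a pop, so its length is at most
`|Q × Γ| · 2^N`. A run from `pα` to `qβ` splits into one pop for each consumed symbol of `α` and,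
for each symbol of `β`, a run between one-symbol stacks followed by the push writing that symbol.
Each piece costs at most `K = (|Q × Γ| + 1) · 2^N`, and `K ≤ |P|^(|P|^4 + 1)`.
-/

theorem le_iterate_card_of_le_map_of_lt {ι : Type*} [Fintype ι] (D : ι → Prop) (f : ι → ℕ)
    {G : ℕ → ℕ} (hG : Monotone G)
    (hf : ∀ i, D i → ∀ b, (∀ j, D j → f j < f i → f j ≤ b) → f i ≤ G b) :
    ∀ i, D i → f i ≤ G^[Fintype.card ι] 0 := by
  classical
  have hmono : Monotone fun n => G^[n] 0 := hG.monotone_iterate_of_le_map (Nat.zero_le _)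
  -- induct with the number of values `≤ f i`, which drops strictly from `i` to `j` when `f j < f i`
  let c : ι → ℕ := fun i => (Finset.univ.filter fun j => D j ∧ f j ≤ f i).card
  suffices h : ∀ i, D i → f i ≤ G^[c i] 0 from
    fun i hi => (h i hi).trans (hmono (Finset.card_le_univ _))
  intro i hi
  induction hfi : f i using Nat.strong_induction_on generalizing i with
  | _ n ih =>
  subst hfi
  have hci : 0 < c i := Finset.card_pos.mpr ⟨i, by simp [hi]⟩
  have hsmaller : ∀ j, D j → f j < f i → f j ≤ G^[c i - 1] 0 := by
    intro j hj hji
    have hcj : c j < c i := Finset.card_lt_card <| Finset.ssubset_iff_of_subset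
      (fun k hk => by
        simp only [Finset.mem_filter] at hk ⊢
        exact ⟨hk.1, hk.2.1, hk.2.2.trans hji.le⟩) |>.mpr
      ⟨i, by simp [hi], by simp; omega⟩
    exact (ih (f j) hji j hj rfl).trans (hmono (by omega))
  calc f i ≤ G (G^[c i - 1] 0) := hf i hi _ hsmaller
    _ = G^[c i - 1 + 1] 0 := (Function.iterate_succ_apply' G _ 0).symm
    _ = G^[c i] 0 := by rw [Nat.sub_add_cancel hci]

theorem iterate_two_mul_add_one_zero_lt (k : ℕ) : (fun b => 2 * b + 1)^[k] 0 < 2 ^ k := by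
  suffices h : (fun b => 2 * b + 1)^[k] 0 + 1 = 2 ^ k by omega
  induction k with
  | zero => rfl
  | succ k ih => rw [Function.iterate_succ_apply', pow_succ, ← ih]; ring

local notation "⟪" p ", " α "⟫" => ((p, Sum.inl α) : Prod _ (SC _))

namespace PDS

variable {Q Γ A : Type} {P : PDS Q Γ A}

@[simp]
theorem mk_inl_inj {p q : Q} {α β : List Γ} : ⟪p, α⟫ = ⟪q, β⟫ ↔ p = q ∧ α = β :=
  ⟨fun h => ⟨congrArg Prod.fst h, Sum.inl.inj (congrArg Prod.snd h)⟩, by rintro ⟨rfl, rfl⟩; rfl⟩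

theorem stepN_add {m n : ℕ} {s t u : Q × SC Γ} (h₁ : P.StepN m s t) (h₂ : P.StepN n t u) :
    P.StepN (m + n) s u := by
  induction m generalizing s with
  | zero =>
    obtain rfl : s = t := h₁
    simpa using h₂
  | succ m ih =>
    obtain ⟨v, hsv, hv⟩ := h₁
    rw [Nat.add_right_comm]
    exact ⟨v, hsv, ih hv⟩

theorem reach_iff_exists_stepN {s t : Q × SC Γ} : P.Reach s t ↔ ∃ n, P.StepN n s t := by
  constructor
  · intro h
    induction h using Relation.ReflTransGen.head_induction_on with
    | refl => exact ⟨0, rfl⟩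
    | head hsu _ ih =>
      obtain ⟨n, hn⟩ := ih
      exact ⟨n + 1, _, hsu, hn⟩
  · rintro ⟨n, hn⟩
    induction n generalizing s with
    | zero =>
      obtain rfl : s = t := hn
      exact .refl
    | succ n ih =>
      obtain ⟨u, hsu, hu⟩ := hn
      exact .head hsu (ih hu)

theorem reach_of_stepN {n : ℕ} {s t : Q × SC Γ} (h : P.StepN n s t) : P.Reach s t :=
  reach_iff_exists_stepN.mpr ⟨n, h⟩

theorem stepAny_cons {p q : Q} {X : Γ} {a : A} {γ : List Γ} (hδ : (p, X, a, q, γ) ∈ P.Δ)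
    (α : List Γ) : P.StepAny ⟪p, X :: α⟫ ⟪q, γ ++ α⟫ :=
  ⟨a, p, X, q, γ, Sum.inl α, hδ, rfl, rfl⟩

theorem exists_mem_of_stepAny {p : Q} {l : List Γ} {t : Q × SC Γ}
    (h : P.StepAny ⟪p, l⟫ t) :
    ∃ X α a q γ, (p, X, a, q, γ) ∈ P.Δ ∧ l = X :: α ∧ t = ⟪q, γ ++ α⟫ := by
  obtain ⟨a, p', X, q, γ, σ | σ, hδ, hs, rfl⟩ := h
  · obtain ⟨rfl, rfl⟩ := mk_inl_inj.mp hs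
    exact ⟨X, σ, a, q, γ, hδ, rfl, rfl⟩
  · exact absurd (congrArg Prod.snd hs) Sum.inl_ne_inr

theorem eq_of_reach_nil {p : Q} {t : Q × SC Γ} (h : P.Reach ⟪p, []⟫ t) :
    t = ⟪p, []⟫ := by
  rcases Relation.ReflTransGen.cases_head h with h | ⟨u, hu, -⟩
  · exact h.symm
  · obtain ⟨X, α, -, -, -, -, hl, -⟩ := exists_mem_of_stepAny hu
    exact (List.cons_ne_nil _ _ hl.symm).elim

theorem stepN_append_right {n : ℕ} {p q : Q} {α β : List Γ} (σ : List Γ)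
    (h : P.StepN n ⟪p, α⟫ ⟪q, β⟫) :
    P.StepN n ⟪p, α ++ σ⟫ ⟪q, β ++ σ⟫ := by
  induction n generalizing p α with
  | zero =>
    obtain ⟨rfl, rfl⟩ := mk_inl_inj.mp h
    rfl
  | succ n ih =>
    obtain ⟨u, hu, hn⟩ := h
    obtain ⟨X, α', a, r, γ, hδ, rfl, rfl⟩ := exists_mem_of_stepAny hu
    exact ⟨⟪r, γ ++ α' ++ σ⟫, by simpa using stepAny_cons hδ (α' ++ σ), ih hn⟩

theorem reach_append_right {p q : Q} {α β : List Γ} (σ : List Γ)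
    (h : P.Reach ⟪p, α⟫ ⟪q, β⟫) :
    P.Reach ⟪p, α ++ σ⟫ ⟪q, β ++ σ⟫ :=
  have ⟨_, hn⟩ := reach_iff_exists_stepN.mp h
  reach_of_stepN (stepN_append_right σ hn)

theorem stepN_append_cases {n : ℕ} {p q : Q} {τ σ ρ : List Γ}
    (h : P.StepN n ⟪p, τ ++ σ⟫ ⟪q, ρ⟫) :
    (∃ τ', ρ = τ' ++ σ ∧ P.StepN n ⟪p, τ⟫ ⟪q, τ'⟫) ∨
      ∃ r n₁ n₂, n₁ + n₂ = n ∧ P.StepN n₁ ⟪p, τ⟫ ⟪r, []⟫ ∧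
        P.StepN n₂ ⟪r, σ⟫ ⟪q, ρ⟫ := by
  induction n generalizing p τ with
  | zero =>
    obtain ⟨rfl, rfl⟩ := mk_inl_inj.mp h
    exact Or.inl ⟨τ, rfl, rfl⟩
  | succ n ih =>
    rcases τ with _ | ⟨X, τ⟩
    · exact Or.inr ⟨p, 0, n + 1, by omega, rfl, h⟩
    obtain ⟨u, hu, hn⟩ := h
    obtain ⟨X', α, a, r, γ, hδ, hl, rfl⟩ := exists_mem_of_stepAny hu
    obtain ⟨rfl, rfl⟩ : X = X' ∧ τ ++ σ = α := by simpa using hl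
    have hstep := stepAny_cons hδ τ
    rcases ih (τ := γ ++ τ) (by rwa [List.append_assoc]) with
      ⟨τ', hρ, h'⟩ | ⟨r', n₁, n₂, hn, h₁, h₂⟩
    · exact Or.inl ⟨τ', hρ, _, hstep, h'⟩
    · exact Or.inr ⟨r', n₁ + 1, n₂, by omega, ⟨_, hstep, h₁⟩, h₂⟩

/-- `Dist(s, t)`; since `sInf ∅ = 0`, it is meaningful only when `P.Reach s t`. -/
noncomputable def dist (P : PDS Q Γ A) (s t : Q × SC Γ) : ℕ := sInf {n | P.StepN n s t}

theorem stepN_dist {s t : Q × SC Γ} (h : P.Reach s t) : P.StepN (P.dist s t) s t :=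
  Nat.sInf_mem (reach_iff_exists_stepN.mp h)

theorem dist_le_of_stepN {n : ℕ} {s t : Q × SC Γ} (h : P.StepN n s t) : P.dist s t ≤ n :=
  Nat.sInf_le h

theorem dist_self (s : Q × SC Γ) : P.dist s s = 0 :=
  Nat.le_zero.mp (dist_le_of_stepN rfl)

theorem dist_le_one_of_stepAny {s t : Q × SC Γ} (h : P.StepAny s t) : P.dist s t ≤ 1 :=
  dist_le_of_stepN ⟨t, h, rfl⟩

theorem dist_trans_le {s t u : Q × SC Γ} (h₁ : P.Reach s t) (h₂ : P.Reach t u) :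
    P.dist s u ≤ P.dist s t + P.dist t u :=
  dist_le_of_stepN (stepN_add (stepN_dist h₁) (stepN_dist h₂))

theorem dist_append_right_le {p q : Q} {α β : List Γ} (σ : List Γ)
    (h : P.Reach ⟪p, α⟫ ⟪q, β⟫) :
    P.dist ⟪p, α ++ σ⟫ ⟪q, β ++ σ⟫ ≤ P.dist ⟪p, α⟫ ⟪q, β⟫ :=
  dist_le_of_stepN (stepN_append_right σ (stepN_dist h))

theorem exists_mem_dist_eq_succ {p : Q} {X : Γ} {α : List Γ} {t : Q × SC Γ}
    (h : P.Reach ⟪p, X :: α⟫ t) (hne : ⟪p, X :: α⟫ ≠ t) :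
    ∃ a q γ, (p, X, a, q, γ) ∈ P.Δ ∧ P.Reach ⟪q, γ ++ α⟫ t ∧
      P.dist ⟪p, X :: α⟫ t = P.dist ⟪q, γ ++ α⟫ t + 1 := by
  have hrun := stepN_dist h
  obtain ⟨n, hn⟩ : ∃ n, P.dist ⟪p, X :: α⟫ t = n + 1 :=
    Nat.exists_eq_succ_of_ne_zero fun h0 => hne (by rw [h0] at hrun; exact hrun)
  rw [hn] at hrun
  obtain ⟨u, hu, hut⟩ := hrun
  obtain ⟨X', α', a, q, γ, hδ, hl, rfl⟩ := exists_mem_of_stepAny hu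
  obtain ⟨rfl, rfl⟩ : X = X' ∧ α = α' := by simpa using hl
  have hreach := reach_of_stepN hut
  refine ⟨a, q, γ, hδ, hreach, le_antisymm ?_ (hn ▸ Nat.succ_le_succ (dist_le_of_stepN hut))⟩
  calc P.dist _ t ≤ P.dist _ ⟪q, γ ++ α⟫ + P.dist _ t :=
        dist_trans_le (.single hu) hreach
    _ ≤ _ := by have := dist_le_one_of_stepAny hu; omega

theorem reach_append_cases {p q : Q} {τ σ ρ : List Γ}
    (h : P.Reach ⟪p, τ ++ σ⟫ ⟪q, ρ⟫) :
    (∃ τ', ρ = τ' ++ σ ∧ P.Reach ⟪p, τ⟫ ⟪q, τ'⟫ ∧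
      P.dist ⟪p, τ ++ σ⟫ ⟪q, ρ⟫ = P.dist ⟪p, τ⟫ ⟪q, τ'⟫) ∨
    ∃ r, P.Reach ⟪p, τ⟫ ⟪r, []⟫ ∧ P.Reach ⟪r, σ⟫ ⟪q, ρ⟫ ∧
      P.dist ⟪p, τ ++ σ⟫ ⟪q, ρ⟫ =
        P.dist ⟪p, τ⟫ ⟪r, []⟫ + P.dist ⟪r, σ⟫ ⟪q, ρ⟫ := by
  rcases stepN_append_cases (stepN_dist h) with ⟨τ', rfl, h'⟩ | ⟨r, n₁, n₂, hn, h₁, h₂⟩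
  · have hreach := reach_of_stepN h'
    exact Or.inl ⟨τ', rfl, hreach,
      le_antisymm (dist_append_right_le σ hreach) (dist_le_of_stepN h')⟩
  · have hreach₁ := reach_of_stepN h₁
    have hreach₂ := reach_of_stepN h₂
    refine Or.inr ⟨r, hreach₁, hreach₂, le_antisymm ?_ ?_⟩
    · calc P.dist _ ⟪q, ρ⟫
          ≤ P.dist _ ⟪r, σ⟫ + P.dist _ ⟪q, ρ⟫ :=
            dist_trans_le (reach_append_right σ hreach₁) hreach₂
        _ ≤ _ := Nat.add_le_add_right (dist_append_right_le σ hreach₁) _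
    · exact hn ▸ Nat.add_le_add (dist_le_of_stepN h₁) (dist_le_of_stepN h₂)

theorem dist_pop_lt (hpp : P.PushPop) [Fintype Q] [Fintype Γ] {p r : Q} {X : Γ}
    (h : P.Reach ⟪p, [X]⟫ ⟪r, []⟫) : P.dist ⟪p, [X]⟫ ⟪r, []⟫ < 2 ^ Fintype.card (Q × Γ × Q) := by
  refine lt_of_le_of_lt ?_ (iterate_two_mul_add_one_zero_lt _)
  refine le_iterate_card_of_le_map_of_lt
    (fun t : Q × Γ × Q => P.Reach ⟪t.1, [t.2.1]⟫ ⟪t.2.2, []⟫)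
    (fun t => P.dist ⟪t.1, [t.2.1]⟫ ⟪t.2.2, []⟫) (fun _ _ h => by omega) ?_ (p, X, r) h
  rintro ⟨p, X, r⟩ h b hb
  dsimp only at h hb ⊢
  obtain ⟨a, q, γ, hδ, hγ, hd⟩ := exists_mem_dist_eq_succ (α := []) h (by simp)
  simp only [List.append_nil] at hγ hd
  rw [hd]
  rcases γ with _ | ⟨c, _ | ⟨d, _ | ⟨e, γ⟩⟩⟩
  · rw [eq_of_reach_nil hγ, PDS.dist_self]
    omega
  · have := hb (q, c, r) hγ (by dsimp only; omega)
    dsimp only at this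
    omega
  · rcases reach_append_cases (τ := [c]) (σ := [d]) hγ with ⟨τ', hnil, -⟩ | ⟨s, h₁, h₂, hs⟩
    · simp at hnil
    · simp only [List.cons_append, List.nil_append] at hs
      have b₁ := hb (q, c, s) h₁ (by dsimp only; omega)
      have b₂ := hb (s, d, r) h₂ (by dsimp only; omega)
      dsimp only at b₁ b₂
      omega
  · simpa using hpp _ hδ

theorem dist_head_le (hpp : P.PushPop) [Fintype Q] [Fintype Γ] {p q : Q} {X Y : Γ}
    (h : P.Reach ⟪p, [X]⟫ ⟪q, [Y]⟫) :
    P.dist ⟪p, [X]⟫ ⟪q, [Y]⟫ ≤ Fintype.card (Q × Γ) * 2 ^ Fintype.card (Q × Γ × Q) := by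
  set c := 2 ^ Fintype.card (Q × Γ × Q)
  have key := le_iterate_card_of_le_map_of_lt
    (fun x : Q × Γ => P.Reach ⟪x.1, [x.2]⟫ ⟪q, [Y]⟫) (fun x => P.dist ⟪x.1, [x.2]⟫ ⟪q, [Y]⟫)
    (G := (c + ·)) (fun _ _ h => Nat.add_le_add_left h c) ?_ (p, X) h
  · simpa using key
  rintro ⟨p, X⟩ h b hb
  dsimp only at h hb ⊢
  by_cases heq : ⟪p, [X]⟫ = ⟪q, [Y]⟫
  · rw [heq, PDS.dist_self]
    exact Nat.zero_le _
  obtain ⟨a, q₁, γ, hδ, hγ, hd⟩ := exists_mem_dist_eq_succ (α := []) h heq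
  simp only [List.append_nil] at hγ hd
  rw [hd]
  rcases γ with _ | ⟨Z, _ | ⟨d, _ | ⟨e, γ⟩⟩⟩
  · simpa using eq_of_reach_nil hγ
  · have := hb (q₁, Z) hγ (by dsimp only; omega)
    have : 1 ≤ c := Nat.one_le_two_pow
    dsimp only at *
    omega
  · rcases reach_append_cases (τ := [Z]) (σ := [d]) hγ with ⟨τ', hY, h₁, hs⟩ | ⟨s, h₁, h₂, hs⟩
    · obtain rfl : τ' = [] := by simpa using congrArg List.length hY
      have := dist_pop_lt hpp h₁
      simp only [List.cons_append, List.nil_append] at hs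
      omega
    · simp only [List.cons_append, List.nil_append] at hs
      have := dist_pop_lt hpp h₁
      have := hb (s, d) h₂ (by dsimp only; omega)
      dsimp only at this
      omega
  · simpa using hpp _ hδ

/-- `d` is pushed by the last step that leaves a stack of height one and is never popped again. -/
theorem exists_last_push (hpp : P.PushPop) {p q : Q} {X : Γ} {β : List Γ}
    (h : P.Reach ⟪p, [X]⟫ ⟪q, β⟫) (hβ : 2 ≤ β.length) :
    ∃ s Z a q₁ c d τ, (s, Z, a, q₁, [c, d]) ∈ P.Δ ∧ β = τ ++ [d] ∧
      P.Reach ⟪p, [X]⟫ ⟪s, [Z]⟫ ∧ P.Reach ⟪q₁, [c]⟫ ⟪q, τ⟫ := by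
  obtain ⟨n, hn⟩ := reach_iff_exists_stepN.mp h
  clear h
  induction n using Nat.strong_induction_on generalizing p X with
  | _ n ih =>
  rcases n with _ | n
  · obtain ⟨-, rfl⟩ := mk_inl_inj.mp hn
    simp at hβ
  obtain ⟨u, hu, hn⟩ := hn
  obtain ⟨X', α, a, q₁, γ, hδ, hl, rfl⟩ := exists_mem_of_stepAny hu
  obtain ⟨rfl, rfl⟩ : X = X' ∧ [] = α := by simpa using hl
  simp only [List.append_nil] at hu hn
  have hfirst : P.Reach ⟪p, [X]⟫ ⟪q₁, γ⟫ := .single hu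
  rcases γ with _ | ⟨Z, _ | ⟨d, _ | ⟨e, γ⟩⟩⟩
  · obtain ⟨-, rfl⟩ := mk_inl_inj.mp (eq_of_reach_nil (reach_of_stepN hn))
    simp at hβ
  · obtain ⟨s, Z', a', q₂, c, d, τ, hδ', rfl, h₁, h₂⟩ := ih n (by omega) hn
    exact ⟨s, Z', a', q₂, c, d, τ, hδ', rfl, hfirst.trans h₁, h₂⟩
  · rcases stepN_append_cases (τ := [Z]) (σ := [d]) hn with
      ⟨τ', rfl, h'⟩ | ⟨r, n₁, n₂, hn', h₁, h₂⟩
    · exact ⟨p, X, a, q₁, Z, d, τ', hδ, rfl, .refl, reach_of_stepN h'⟩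
    · obtain ⟨s, Z', a', q₂, c, d', τ, hδ', rfl, h₁', h₂'⟩ := ih n₂ (by omega) h₂
      exact ⟨s, Z', a', q₂, c, d', τ, hδ', rfl,
        (hfirst.trans (reach_append_right [d] (reach_of_stepN h₁))).trans h₁', h₂'⟩
  · simpa using hpp _ hδ

def symbolCost (Q Γ : Type) [Fintype Q] [Fintype Γ] : ℕ :=
  (Fintype.card (Q × Γ) + 1) * 2 ^ Fintype.card (Q × Γ × Q)

theorem two_pow_le_symbolCost (Q Γ : Type) [Fintype Q] [Fintype Γ] :
    2 ^ Fintype.card (Q × Γ × Q) ≤ symbolCost Q Γ :=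
  Nat.le_mul_of_pos_left _ (Nat.succ_pos _)

theorem card_mul_two_pow_add_one_le_symbolCost (Q Γ : Type) [Fintype Q] [Fintype Γ] :
    Fintype.card (Q × Γ) * 2 ^ Fintype.card (Q × Γ × Q) + 1 ≤ symbolCost Q Γ := by
  rw [symbolCost, add_one_mul]
  exact Nat.add_le_add_left Nat.one_le_two_pow _

theorem dist_single_le (hpp : P.PushPop) [Fintype Q] [Fintype Γ] {p q : Q} {X : Γ}
    {β : List Γ} (h : P.Reach ⟪p, [X]⟫ ⟪q, β⟫) :
    P.dist ⟪p, [X]⟫ ⟪q, β⟫ ≤ (β.length + 1) * symbolCost Q Γ := by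
  induction hn : β.length using Nat.strong_induction_on generalizing p X q β with
  | _ n ih =>
  subst hn
  have hpop := two_pow_le_symbolCost Q Γ
  have hhead := card_mul_two_pow_add_one_le_symbolCost Q Γ
  rcases β with _ | ⟨Y, _ | ⟨W, β⟩⟩
  · have := dist_pop_lt hpp h
    simp only [List.length_nil]
    omega
  · have := dist_head_le hpp h
    simp only [List.length_singleton]
    omega
  obtain ⟨s, Z, a, q₁, c, d, τ, hδ, hβ, h₁, h₂⟩ := exists_last_push hpp h (by simp)
  have hlen : (Y :: W :: β).length = τ.length + 1 := by simp [hβ]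
  have hpush : P.StepAny ⟪s, [Z]⟫ ⟪q₁, [c, d]⟫ := by simpa using stepAny_cons hδ []
  have hrest : P.Reach ⟪q₁, [c, d]⟫ ⟪q, Y :: W :: β⟫ := hβ ▸ reach_append_right [d] h₂
  calc P.dist ⟪p, [X]⟫ ⟪q, Y :: W :: β⟫
      ≤ P.dist ⟪p, [X]⟫ ⟪s, [Z]⟫ + (P.dist ⟪s, [Z]⟫ ⟪q₁, [c, d]⟫ +
          P.dist ⟪q₁, [c, d]⟫ ⟪q, Y :: W :: β⟫) :=
        (dist_trans_le h₁ ((Relation.ReflTransGen.single hpush).trans hrest)).trans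
          (Nat.add_le_add_left (dist_trans_le (.single hpush) hrest) _)
    _ ≤ Fintype.card (Q × Γ) * 2 ^ Fintype.card (Q × Γ × Q) +
          (1 + (τ.length + 1) * symbolCost Q Γ) := by
        gcongr
        · exact dist_head_le hpp h₁
        · exact dist_le_one_of_stepAny hpush
        · rw [hβ]
          exact (dist_append_right_le [d] h₂).trans (ih _ (by omega) h₂ rfl)
    _ ≤ ((Y :: W :: β).length + 1) * symbolCost Q Γ := by
        rw [hlen]
        linarith

theorem dist_le_length_add_length_mul (hpp : P.PushPop) [Fintype Q] [Fintype Γ] {p q : Q}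
    {α β : List Γ} (h : P.Reach ⟪p, α⟫ ⟪q, β⟫) :
    P.dist ⟪p, α⟫ ⟪q, β⟫ ≤ (α.length + β.length) * symbolCost Q Γ := by
  induction α generalizing p with
  | nil =>
    rw [eq_of_reach_nil h, PDS.dist_self]
    exact Nat.zero_le _
  | cons X α ih =>
    have hpop := two_pow_le_symbolCost Q Γ
    rcases reach_append_cases (τ := [X]) (σ := α) h with ⟨β₁, rfl, h₁, hd⟩ | ⟨r, h₁, h₂, hd⟩
    · refine hd.trans_le ((dist_single_le hpp h₁).trans (Nat.mul_le_mul_right _ ?_))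
      simp only [List.length_cons, List.length_append]
      omega
    · refine hd.trans_le ?_
      have := dist_pop_lt hpp h₁
      have := ih h₂
      simp only [List.length_cons]
      linarith

theorem symbolCost_le_size [Fintype Q] [Fintype Γ] [Fintype A] [Nonempty Q] :
    symbolCost Q Γ ≤ P.size ^ (P.size ^ 4 + 1) := by
  have hs : Fintype.card Q + Fintype.card Γ ≤ P.size := by unfold size; omega
  simp only [symbolCost, Fintype.card_prod]
  set s := P.size
  set x := Fintype.card Q
  set y := Fintype.card Γ
  have hx : 1 ≤ x := Fintype.card_pos
  rcases Nat.eq_zero_or_pos y with hy | hy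
  · simpa [hy] using Nat.one_le_pow _ _ (by omega)
  have hxy : x * y + 1 ≤ s ^ 2 := by nlinarith
  have hexp : 2 ^ (x * (y * x)) ≤ s ^ s ^ 3 :=
    (Nat.pow_le_pow_left (by omega) _).trans (Nat.pow_le_pow_right (by omega) (by
      calc x * (y * x) ≤ s * (s * s) := by gcongr <;> omega
        _ = s ^ 3 := by ring))
  have hdeg : s ^ 3 + 2 ≤ s ^ 4 + 1 := by nlinarith [Nat.one_le_pow 3 s (by omega)]
  calc (x * y + 1) * 2 ^ (x * (y * x)) ≤ s ^ 2 * s ^ s ^ 3 := Nat.mul_le_mul hxy hexp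
    _ = s ^ (s ^ 3 + 2) := by ring
    _ ≤ s ^ (s ^ 4 + 1) := Nat.pow_le_pow_right (by omega) hdeg

end PDS

/-- For a PDS in push-pop normal form, with `E = |P|^(|P|^4 + 1)`: whenever
`pα →* qβ`, then `Dist(pα, qβ) ≤ (|α| + |β|) · E`. -/
theorem stmt_5 (Q Γ A : Type) [Fintype Q] [Fintype Γ] [Fintype A]
    (P : PDS Q Γ A) (hpp : P.PushPop) (p q : Q) (α β : List Γ)
    (hreach : P.Reach (p, Sum.inl α) (q, Sum.inl β)) :
    ∃ m : ℕ, P.StepN m (p, Sum.inl α) (q, Sum.inl β) ∧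
      m ≤ (α.length + β.length) * P.size ^ (P.size ^ 4 + 1) := by
  have : Nonempty Q := ⟨p⟩
  exact ⟨P.dist _ _, PDS.stepN_dist hreach, (PDS.dist_le_length_add_length_mul hpp hreach).trans
    (Nat.mul_le_mul_left _ PDS.symbolCost_le_size)⟩
end

section
/- For every pushdown system P = (Q, Γ, A, Δ) in push-pop normal form, setting F = 2^{9·2^{|Q|²}} · |P|²: every configuration qδ of P reachable from an initial configuration q₀α₀ with |δ| ≥ F + |α₀| can be written as qδ = qαβγ, where (α, β) is a linked pair, |α|, |β| ≤ F, and all configurations of the form qαβ^iγ (for i ∈ ℕ) are reachable from q₀α₀. -/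
/-!
A run from `q₀α₀` to `qδ` passes, for every suffix `v` of `δ` longer than `α₀`, through a
configuration `pXv` after which `v` is never touched again; in push-pop normal form these
checkpoints can be maintained step by step along the run. If `δ = αβγ` and the checkpoints at `γ`
and at `βγ` carry the same `pX`, the piece of run between them turns `pX` into `pXβ`, and repeating
it reaches every `qαβ^iγ`.

To also make `(α, β)` linked, colour every cut point `j ≤ F` of `δ` by its checkpoint and by
`eats` of the prefix of length `j`. Some colour class has more than `2^s` points, where
`s ≤ 2^{|Q|²}` is the number of maps `eats_x`. The maps `eats` of the segments between consecutive
points of that class form a word of length at least `2^s` in the monoid of maps on `Set Q`, and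
every such word has a factor with idempotent product: by induction on `s`, the word cuts into
short blocks whose products avoid the J-maximal values, and the word of block products is again
idempotent-free. An idempotent factor between two cut points of the same colour gives the split.
-/

theorem List.drop_take_append_drop_take {α : Type*} (δ : List α) {i j k : ℕ} (hij : i ≤ j)
    (hjk : j ≤ k) : (δ.take j).drop i ++ (δ.take k).drop j = (δ.take k).drop i := by
  conv_rhs => rw [← List.take_append_drop j (δ.take k), List.take_take, min_eq_left hjk]
  rw [List.drop_append]
  rcases le_or_gt j δ.length with h | h
  · simp [show i - min j δ.length = 0 by omega]
  · simp [List.drop_eq_nil_of_le, h.le, show δ.length ≤ k by omega]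

theorem List.exists_eq_append_of_append_eq_append {α : Type*} {a b c d : List α}
    (h : a ++ b = c ++ d) (hd : d.length ≤ b.length) : ∃ e, b = e ++ d ∧ c = a ++ e := by
  obtain ⟨e, rfl⟩ := List.suffix_of_suffix_length_le (h ▸ List.suffix_append c d)
    (List.suffix_append a b) hd
  exact ⟨e, rfl, List.append_cancel_right (by simpa using h.symm)⟩

theorem List.exists_eq_range'_of_infix_range' {l : List ℕ} {n : ℕ} (h : l <:+: List.range' 0 n) :
    ∃ a, l = List.range' a l.length ∧ a + l.length ≤ n := by
  obtain ⟨s, r, h⟩ := h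
  obtain ⟨k, hk, h, -⟩ := List.range'_eq_append_iff.1 h.symm
  obtain ⟨a, ha, -, hl⟩ := List.range'_eq_append_iff.1 h.symm
  simp only [Nat.zero_add, Nat.mul_one] at hl
  subst hl
  simp only [List.length_range']
  exact ⟨a, rfl, by omega⟩

theorem Nat.mul_mul_two_pow_lt {a b s m n : ℕ} (ha : a ≤ n) (hb : b ≤ n) (hn : 0 < n)
    (hs : s ≤ m) : a * b * (s * 2 ^ s) < 2 ^ (9 * m) * n ^ 2 := by
  have h₁ : s * 2 ^ s < 2 ^ (9 * m) :=
    calc s * 2 ^ s < 2 ^ s * 2 ^ s := Nat.mul_lt_mul_of_pos_right s.lt_two_pow_self (by positivity)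
      _ ≤ 2 ^ (9 * m) := by rw [← pow_add]; exact Nat.pow_le_pow_right two_pos (by omega)
  calc a * b * (s * 2 ^ s) ≤ n ^ 2 * (s * 2 ^ s) := Nat.mul_le_mul_right _ (by nlinarith)
    _ < n ^ 2 * 2 ^ (9 * m) := Nat.mul_lt_mul_of_pos_left h₁ (by positivity)
    _ = 2 ^ (9 * m) * n ^ 2 := Nat.mul_comm _ _

section IdempotentFactors

variable {M : Type*} [Monoid M]

theorem exists_pow_isIdempotentElem [Finite M] (a : M) : ∃ k ≠ 0, IsIdempotentElem (a ^ k) := by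
  let : TopologicalSpace M := ⊥
  have : DiscreteTopology M := ⟨rfl⟩
  obtain ⟨_, ⟨k, rfl⟩, h⟩ := exists_idempotent_in_compact_subsemigroup
    (fun _ => continuous_of_discreteTopology) (Set.range fun k : ℕ => a ^ (k + 1))
    (Set.range_nonempty _) (Set.toFinite _).isCompact
    (by rintro _ ⟨i, rfl⟩ _ ⟨j, rfl⟩; exact ⟨i + j + 1, by rw [← pow_add]; ring_nf⟩)
  exact ⟨k + 1, k.succ_ne_zero, h⟩

/-- Green's preorder `x ≤_J y` means `jIdeal x ⊆ jIdeal y`. -/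
def jIdeal (x : M) : Set M := {y | ∃ a b, y = a * x * b}

theorem mem_jIdeal_self (x : M) : x ∈ jIdeal x := ⟨1, 1, by simp⟩

theorem jIdeal_subset_of_mem {x y : M} (h : y ∈ jIdeal x) : jIdeal y ⊆ jIdeal x := by
  rintro _ ⟨a, b, rfl⟩
  obtain ⟨c, d, rfl⟩ := h
  exact ⟨a * c, d * b, by simp only [mul_assoc]⟩

theorem jIdeal_mul_subset_left (x y : M) : jIdeal (x * y) ⊆ jIdeal x :=
  jIdeal_subset_of_mem ⟨1, y, by simp⟩

/-- With `a = c x` and `v = a d`, `a v = a` gives `v = a^k v d^k = a^k` for an idempotent power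
`a^k`. -/
theorem isIdempotentElem_of_mul_eq_self_of_mem_jIdeal [Finite M] {x v : M} (hxv : x * v = x)
    (hv : v ∈ jIdeal x) : IsIdempotentElem v := by
  obtain ⟨c, d, rfl⟩ := hv
  have ha : c * x * (c * x * d) = c * x := by rw [mul_assoc c x, hxv]
  generalize c * x = a at ha ⊢
  have hconj : ∀ k, a ^ k * (a * d) * d ^ k = a * d := by
    intro k
    induction k with
    | zero => simp
    | succ k ih =>
      calc a ^ (k + 1) * (a * d) * d ^ (k + 1) = a ^ k * (a * (a * d)) * d * d ^ k := by
            rw [pow_succ, pow_succ']; simp only [mul_assoc]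
        _ = a * d := by rw [ha, ← ih]; simp only [mul_assoc]
  obtain ⟨k, hk, hidem⟩ := exists_pow_isIdempotentElem a
  have hfix : a ^ k * (a * d) = a ^ k := by
    obtain ⟨k, rfl⟩ := Nat.exists_eq_succ_of_ne_zero hk
    rw [pow_succ, mul_assoc, ha]
  have : a * d = a ^ k :=
    calc a * d = a ^ k * (a * d) * d ^ k := (hconj k).symm
      _ = a ^ k * (a ^ k * (a * d) * d ^ k) := by rw [hfix, ← mul_assoc, hidem.eq]
      _ = a ^ k := by rw [hconj k, hfix]
  rw [this]
  exact hidem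

open scoped Classical in
noncomputable def jMaximals (S : Finset M) : Finset M := {x ∈ S | MaximalFor (· ∈ S) jIdeal x}

theorem mem_jMaximals {S : Finset M} {x : M} :
    x ∈ jMaximals S ↔ MaximalFor (· ∈ S) jIdeal x := by
  classical
  simp only [jMaximals, Finset.mem_filter, and_iff_right_iff_imp]
  exact fun h => h.1

theorem jMaximals_nonempty {S : Finset M} (hS : S.Nonempty) : (jMaximals S).Nonempty := by
  obtain ⟨x, hx⟩ := S.exists_maximalFor jIdeal hS
  exact ⟨x, mem_jMaximals.2 hx⟩

theorem mul_mem_sdiff_jMaximals [DecidableEq M] {S : Finset M}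
    (hS : ∀ a ∈ S, ∀ b ∈ S, a * b ∈ S) {a b : M} (ha : a ∈ S \ jMaximals S)
    (hb : b ∈ S \ jMaximals S) : a * b ∈ S \ jMaximals S := by
  rw [Finset.mem_sdiff, mem_jMaximals] at ha hb ⊢
  refine ⟨hS a ha.1 b hb.1, fun hab => ha.2 ⟨ha.1, fun y hy hay => ?_⟩⟩
  exact (hab.2 hy ((jIdeal_mul_subset_left a b).trans hay)).trans (jIdeal_mul_subset_left a b)

theorem isIdempotentElem_of_mul_eq_self_of_maximalFor [Finite M] {S : Finset M} {x v : M}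
    (hx : MaximalFor (· ∈ S) jIdeal x) (hv : v ∈ S) (hxv : x * v = x) : IsIdempotentElem v :=
  isIdempotentElem_of_mul_eq_self_of_mem_jIdeal hxv <|
    hx.2 hv (jIdeal_subset_of_mem ⟨x, 1, by rw [mul_one, hxv]⟩) (mem_jIdeal_self v)

theorem List.prod_mem_of_ne_nil {S : Finset M} (hS : ∀ a ∈ S, ∀ b ∈ S, a * b ∈ S) {w : List M}
    (hw : ∀ x ∈ w, x ∈ S) (hne : w ≠ []) : w.prod ∈ S := by
  induction w with
  | nil => exact absurd rfl hne
  | cons a w ih =>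
    rcases eq_or_ne w [] with rfl | hw'
    · simpa using hw a (by simp)
    · exact hS a (hw a (by simp)) _ (ih (fun x hx => hw x (by simp [hx])) hw')

def IdempotentFree (w : List M) : Prop := ∀ u, u <:+: w → u ≠ [] → ¬ IsIdempotentElem u.prod

theorem IdempotentFree.of_infix {w u : List M} (hw : IdempotentFree w) (hu : u <:+: w) :
    IdempotentFree u :=
  fun v hv => hw v (hv.trans hu)

theorem IdempotentFree.map_prod {zs : List (List M)} {rest : List M}
    (hfree : IdempotentFree (zs.flatten ++ rest)) (hzs : ∀ z ∈ zs, z ≠ []) :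
    IdempotentFree (zs.map List.prod) := by
  intro u hu hne hidem
  obtain ⟨l, hl, rfl⟩ := List.infix_map_iff.1 hu
  refine hfree l.flatten (hl.flatten.trans (List.prefix_append _ _).isInfix) ?_
    (by rwa [List.prod_flatten])
  obtain ⟨z, hz⟩ := List.exists_mem_of_ne_nil l (by simpa using hne)
  exact fun h => hzs z (hl.subset hz) (List.flatten_eq_nil_iff.1 h z hz)

/-- `x * v = x` with `x` J-maximal forces `v` to be idempotent, so these prefix products are
pairwise distinct. -/
theorem IdempotentFree.le_card_jMaximals [Finite M] {S : Finset M}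
    (hS : ∀ a ∈ S, ∀ b ∈ S, a * b ∈ S) {w : List M} (hw : ∀ x ∈ w, x ∈ S)
    (hfree : IdempotentFree w) {m : ℕ} (hm : m ≤ w.length)
    (hmax : ∀ t, 1 ≤ t → t ≤ m → (w.take t).prod ∈ jMaximals S) : m ≤ (jMaximals S).card := by
  have hne : ∀ t t', 1 ≤ t → t < t' → t' ≤ m → (w.take t).prod ≠ (w.take t').prod := by
    intro t t' ht htt' ht' heq
    set v := (w.take t').drop t
    have hv : v <:+: w := ((w.take t').drop_suffix t).isInfix.trans (w.take_prefix t').isInfix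
    have hvne : v ≠ [] := by simp [v, List.drop_eq_nil_iff]; omega
    have hxv : (w.take t).prod * v.prod = (w.take t).prod := by
      rw [← List.prod_append, heq, ← List.take_append_drop t (w.take t'), List.take_take,
        min_eq_left htt'.le]
    exact hfree v hv hvne <| isIdempotentElem_of_mul_eq_self_of_maximalFor
      (mem_jMaximals.1 (hmax t ht (by omega)))
      (List.prod_mem_of_ne_nil hS (fun x hx => hw x (hv.subset hx)) hvne) hxv
  have := Finset.card_le_card_of_injOn (fun t => (w.take t).prod) (s := Finset.Icc 1 m)
    (fun t ht => hmax t (Finset.mem_Icc.1 ht).1 (Finset.mem_Icc.1 ht).2) ?_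
  · simpa using this
  intro t ht t' ht' h
  simp only [Finset.coe_Icc, Set.mem_Icc] at ht ht'
  by_contra hne'
  rcases lt_or_gt_of_ne hne' with hlt | hlt
  · exact hne t t' ht.1 hlt ht'.2 h
  · exact hne t' t ht'.1 hlt ht.2 h.symm

theorem IdempotentFree.exists_factorization [Finite M] [DecidableEq M] {S : Finset M}
    (hS : ∀ a ∈ S, ∀ b ∈ S, a * b ∈ S) {w : List M} (hw : ∀ x ∈ w, x ∈ S)
    (hfree : IdempotentFree w) :
    ∃ (zs : List (List M)) (rest : List M), w = zs.flatten ++ rest ∧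
      (∀ z ∈ zs, z ≠ [] ∧ z.prod ∈ S \ jMaximals S ∧ z.length ≤ (jMaximals S).card + 1) ∧
      rest.length ≤ (jMaximals S).card := by
  classical
  induction hn : w.length using Nat.strong_induction_on generalizing w with
  | _ n ih =>
  by_cases hcut : ∃ t, 1 ≤ t ∧ t ≤ w.length ∧ (w.take t).prod ∉ jMaximals S
  · obtain ⟨t, ⟨ht1, htw, htmax⟩, hmin⟩ : ∃ t, (1 ≤ t ∧ t ≤ w.length ∧
          (w.take t).prod ∉ jMaximals S) ∧
        ∀ t' < t, ¬ (1 ≤ t' ∧ t' ≤ w.length ∧ (w.take t').prod ∉ jMaximals S) :=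
      ⟨Nat.find hcut, Nat.find_spec hcut, fun _ => Nat.find_min hcut⟩
    have hz : w.take t ≠ [] := List.ne_nil_of_length_pos (by simp; omega)
    obtain ⟨zs, rest, hsplit, hzs, hrest⟩ := ih (w.length - t) (by omega)
      (fun x hx => hw x (List.mem_of_mem_drop hx)) (hfree.of_infix (w.drop_suffix t).isInfix)
      (by simp)
    refine ⟨w.take t :: zs, rest, by simp [← hsplit], ?_, hrest⟩
    intro z hz'
    rcases List.mem_cons.1 hz' with rfl | hz'
    · refine ⟨hz, Finset.mem_sdiff.2 ⟨List.prod_mem_of_ne_nil hS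
        (fun x hx => hw x (List.mem_of_mem_take hx)) hz, htmax⟩, ?_⟩
      have := hfree.le_card_jMaximals hS hw (m := t - 1) (by omega) fun t' h1 h2 => by
        have := hmin t' (by omega)
        push Not at this
        exact this h1 (by omega)
      simp only [List.length_take]
      omega
    · exact hzs z hz'
  · push Not at hcut
    exact ⟨[], w, by simp, by simp, hfree.le_card_jMaximals hS hw le_rfl hcut⟩

theorem IdempotentFree.length_lt_two_pow [Finite M] {S : Finset M}
    (hS : ∀ a ∈ S, ∀ b ∈ S, a * b ∈ S) {w : List M} (hw : ∀ x ∈ w, x ∈ S)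
    (hfree : IdempotentFree w) : w.length < 2 ^ S.card := by
  classical
  induction hn : S.card using Nat.strong_induction_on generalizing S w with
  | _ n ih =>
  rcases S.eq_empty_or_nonempty with rfl | hSne
  · simp [List.eq_nil_iff_forall_not_mem.2 fun x hx => by simpa using hw x hx]
  set c := (jMaximals S).card
  have hmaxS : jMaximals S ⊆ S := Finset.filter_subset _ _
  have hc : 0 < c := Finset.card_pos.2 (jMaximals_nonempty hSne)
  have hcard : (S \ jMaximals S).card + c = n := by
    rw [Finset.card_sdiff_of_subset hmaxS]; have := Finset.card_le_card hmaxS; omega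
  obtain ⟨zs, rest, rfl, hzs, hrest⟩ := hfree.exists_factorization hS hw
  have hzs' : (zs.map List.prod).length < 2 ^ (S \ jMaximals S).card :=
    ih _ (by omega) (fun a ha b hb => mul_mem_sdiff_jMaximals hS ha hb)
      (by simpa using fun z hz => (hzs z hz).2.1) (hfree.map_prod fun z hz => (hzs z hz).1) rfl
  have hflat : zs.flatten.length ≤ zs.length * (c + 1) := by
    rw [List.length_flatten]
    simpa using List.sum_le_card_nsmul (zs.map List.length) (c + 1)
      (by simpa using fun z hz => (hzs z hz).2.2)
  have hc2 : c + 1 ≤ 2 ^ c := Nat.lt_two_pow_self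
  rw [List.length_map] at hzs'
  calc (zs.flatten ++ rest).length + 1 ≤ (zs.length + 1) * (c + 1) := by
        rw [List.length_append]; nlinarith
    _ ≤ 2 ^ (S \ jMaximals S).card * 2 ^ c := Nat.mul_le_mul hzs' hc2
    _ = 2 ^ n := by rw [← pow_add, hcard]

theorem exists_infix_isIdempotentElem_prod [Finite M] {S : Finset M}
    (hS : ∀ a ∈ S, ∀ b ∈ S, a * b ∈ S) {w : List M} (hw : ∀ x ∈ w, x ∈ S)
    (hlen : 2 ^ S.card ≤ w.length) : ∃ u, u <:+: w ∧ u ≠ [] ∧ IsIdempotentElem u.prod := by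
  by_contra h
  push Not at h
  exact (IdempotentFree.length_lt_two_pow hS hw h).not_ge hlen

theorem exists_isIdempotentElem_segment [Finite M] {α : Type*} {S : Finset M}
    (hS : ∀ a ∈ S, ∀ b ∈ S, a * b ∈ S) {φ : List α → M} (hφS : ∀ x, φ x ∈ S)
    (hφ_nil : φ [] = 1) (hφ_append : ∀ x y, φ (x ++ y) = φ x * φ y) (δ : List α)
    {T : Finset ℕ} (hT : 2 ^ S.card < T.card) :
    ∃ i ∈ T, ∃ j ∈ T, i < j ∧ IsIdempotentElem (φ ((δ.take j).drop i)) := by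
  have hf : (Set.ofPred (· ∈ T)).Finite := T.finite_toSet
  have hcard : hf.toFinset.card = T.card := by simp
  set J := Nat.nth (· ∈ T)
  have hJ_mono : ∀ {a b}, a ≤ b → b < T.card → J a ≤ J b := fun hab hb =>
    Nat.nth_le_nth_of_lt_card hf hab (hcard ▸ hb)
  set f := fun u => φ ((δ.take (J (u + 1))).drop (J u))
  have hprod : ∀ k a, a + k < T.card →
      ((List.range' a k).map f).prod = φ ((δ.take (J (a + k))).drop (J a)) := by
    intro k
    induction k with
    | zero => intro a _; simp [hφ_nil]
    | succ k ih =>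
      intro a hak
      rw [List.range'_succ, List.map_cons, List.prod_cons, ih (a + 1) (by omega), ← hφ_append,
        List.drop_take_append_drop_take _ (hJ_mono (by omega) (by omega))
          (hJ_mono (by omega) (by omega)), show a + 1 + k = a + (k + 1) by omega]
  obtain ⟨u, hu, hne, hidem⟩ := exists_infix_isIdempotentElem_prod hS
    (w := (List.range' 0 (T.card - 1)).map f) (by simp [f, hφS]) (by simp; omega)
  obtain ⟨l, hl, rfl⟩ := List.infix_map_iff.1 hu
  obtain ⟨a, hla, hlen⟩ := List.exists_eq_range'_of_infix_range' hl
  have hk : l.length ≠ 0 := by simpa using hne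
  rw [hla, hprod _ _ (by omega)] at hidem
  exact ⟨J a, Nat.nth_mem_of_lt_card hf (by omega), J (a + l.length),
    Nat.nth_mem_of_lt_card hf (by omega), Nat.nth_lt_nth_of_lt_card hf (by omega) (by omega),
    hidem⟩

theorem exists_monochromatic_isIdempotentElem_segment [Finite M] {α C : Type*} {S : Finset M}
    (hS : ∀ a ∈ S, ∀ b ∈ S, a * b ∈ S) {φ : List α → M} (hφS : ∀ x, φ x ∈ S)
    (hφ_nil : φ [] = 1) (hφ_append : ∀ x y, φ (x ++ y) = φ x * φ y) (δ : List α)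
    {col : ℕ → C} {t : Finset C} (hcol : ∀ j, col j ∈ t) {N : ℕ}
    (hN : t.card * 2 ^ S.card < N) :
    ∃ i j, 1 ≤ i ∧ i < j ∧ j ≤ N ∧ col i = col j ∧ IsIdempotentElem (φ ((δ.take j).drop i)) := by
  classical
  obtain ⟨c, -, hc⟩ := Finset.exists_lt_card_fiber_of_mul_lt_card_of_maps_to
    (s := Finset.Icc 1 N) (fun j _ => hcol j) (by simpa using hN)
  obtain ⟨i, hi, j, hj, hij, hidem⟩ := exists_isIdempotentElem_segment hS hφS hφ_nil hφ_append δ hc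
  simp only [Finset.mem_filter, Finset.mem_Icc] at hi hj
  exact ⟨i, j, hi.1.1, hij, hj.1.2, hi.2.trans hj.2.symm, hidem⟩

end IdempotentFactors

namespace PDS

open Relation

variable {Q Γ A : Type}

inductive FinStep (P : PDS Q Γ A) : Q × List Γ → Q × List Γ → Prop
  | mk {p X a q γ} (σ : List Γ) : (p, X, a, q, γ) ∈ P.Δ → FinStep P (p, X :: σ) (q, γ ++ σ)

def eatsOp (P : PDS Q Γ A) (x : List Γ) : (Function.End (Set Q))ᵐᵒᵖ := .op (P.eats x)

/-- For a run from `s₀` to `s` and a split `s.2 = u ++ v` above `s₀.2`, the run passes through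
`(st |v|, top |v| :: v)` and leaves `v` untouched afterwards. -/
def Checkpoints (P : PDS Q Γ A) (s₀ s : Q × List Γ) (st : ℕ → Q) (top : ℕ → Γ) : Prop :=
  ∀ u v, s.2 = u ++ v → u ≠ [] → s₀.2.length ≤ v.length →
    ReflTransGen P.FinStep s₀ (st v.length, top v.length :: v) ∧
    ReflTransGen P.FinStep (st v.length, [top v.length]) (s.1, u) ∧
    ∀ u' w, u = u' ++ w → u' ≠ [] → w ≠ [] →
      ReflTransGen P.FinStep (st v.length, [top v.length])
        (st (w ++ v).length, top (w ++ v).length :: w)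

variable {P : PDS Q Γ A}

theorem stepAny_inl_iff {p : Q} {σ : List Γ} {t : Q × SC Γ} :
    P.StepAny (p, .inl σ) t ↔ ∃ s, P.FinStep (p, σ) s ∧ t = (s.1, .inl s.2) := by
  constructor
  · rintro ⟨a, p', X, q, γ, τ, hmem, hs, rfl⟩
    rcases τ with τ | τ
    · cases hs
      exact ⟨(q, γ ++ τ), .mk τ hmem, rfl⟩
    · cases hs
  · rintro ⟨_, ⟨τ, hmem⟩, rfl⟩
    exact ⟨_, _, _, _, _, .inl τ, hmem, rfl, rfl⟩

theorem reach_inl_iff {p q : Q} {σ σ' : List Γ} :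
    P.Reach (p, .inl σ) (q, .inl σ') ↔ ReflTransGen P.FinStep (p, σ) (q, σ') := by
  constructor
  · intro h
    suffices ∀ t, P.Reach (p, .inl σ) t →
        ∃ s, ReflTransGen P.FinStep (p, σ) s ∧ t = (s.1, .inl s.2) by
      obtain ⟨⟨q', σ''⟩, hs, heq⟩ := this _ h
      cases heq
      exact hs
    intro t ht
    induction ht with
    | refl => exact ⟨_, .refl, rfl⟩
    | tail _ hstep ih =>
      obtain ⟨s, hs, rfl⟩ := ih
      obtain ⟨s', hs', rfl⟩ := stepAny_inl_iff.1 hstep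
      exact ⟨s', hs.tail hs', rfl⟩
  · exact fun h => h.lift (fun s : Q × List Γ => (s.1, (.inl s.2 : SC Γ)))
      fun _ b h => stepAny_inl_iff.2 ⟨b, h, rfl⟩

theorem FinStep.append_right {s t : Q × List Γ} (h : P.FinStep s t) (τ : List Γ) :
    P.FinStep (s.1, s.2 ++ τ) (t.1, t.2 ++ τ) := by
  obtain ⟨σ, hmem⟩ := h
  simpa using FinStep.mk (σ ++ τ) hmem

theorem finReach_append_right {s t : Q × List Γ} (h : ReflTransGen P.FinStep s t)
    (τ : List Γ) : ReflTransGen P.FinStep (s.1, s.2 ++ τ) (t.1, t.2 ++ τ) :=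
  h.lift _ fun _ _ h => h.append_right τ

theorem eq_of_finReach_nil {p : Q} {s : Q × List Γ} (h : ReflTransGen P.FinStep (p, []) s) :
    s = (p, []) := by
  rcases h.cases_head with h | ⟨_, h, _⟩
  · exact h.symm
  · cases h

theorem exists_of_finReach_append_nil {p r : Q} {x y : List Γ}
    (h : ReflTransGen P.FinStep (p, x ++ y) (r, [])) :
    ∃ m, ReflTransGen P.FinStep (p, x) (m, []) ∧ ReflTransGen P.FinStep (m, y) (r, []) := by
  generalize hs : (p, x ++ y) = s at h
  induction h using ReflTransGen.head_induction_on generalizing p x with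
  | refl =>
    simp only [Prod.mk.injEq, List.append_eq_nil_iff] at hs
    obtain ⟨rfl, rfl, rfl⟩ := hs
    exact ⟨p, .refl, .refl⟩
  | head hstep hrest ih =>
    subst hs
    rcases x with _ | ⟨X, x⟩
    · exact ⟨p, .refl, .head hstep hrest⟩
    · obtain ⟨_, hmem⟩ := hstep
      obtain ⟨m, hx, hy⟩ := ih (x := _ ++ x) (by rw [List.append_assoc]; rfl)
      exact ⟨m, .head (.mk x hmem) hx, hy⟩

theorem eats_eq (x : List Γ) (T : Set Q) :
    P.eats x T = {r | ∃ q ∈ T, ReflTransGen P.FinStep (q, x) (r, [])} := by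
  simp only [eats, reach_inl_iff]

theorem eats_nil : P.eats ([] : List Γ) = id := by
  ext T r
  simp only [eats_eq, Set.mem_ofPred_eq, id_eq]
  constructor
  · rintro ⟨q, hq, h⟩
    cases eq_of_finReach_nil h
    exact hq
  · exact fun hr => ⟨r, hr, .refl⟩

theorem eats_append (x y : List Γ) : P.eats (x ++ y) = P.eats y ∘ P.eats x := by
  ext T r
  simp only [eats_eq, Function.comp_apply, Set.mem_ofPred_eq]
  constructor
  · rintro ⟨q, hq, h⟩
    obtain ⟨m, hx, hy⟩ := exists_of_finReach_append_nil h
    exact ⟨m, ⟨q, hq, hx⟩, hy⟩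
  · rintro ⟨m, ⟨q, hq, hx⟩, hy⟩
    exact ⟨q, hq, (finReach_append_right hx y).trans hy⟩

theorem eats_eq_biUnion (x : List Γ) (T : Set Q) : P.eats x T = ⋃ q ∈ T, P.eats x {q} := by
  ext r
  simp [eats]

theorem eatsOp_nil : P.eatsOp [] = 1 := by
  simp only [eatsOp, eats_nil]; rfl

theorem eatsOp_append (x y : List Γ) : P.eatsOp (x ++ y) = P.eatsOp x * P.eatsOp y := by
  simp only [eatsOp, eats_append]; rfl

instance [Finite Q] : Finite (Function.End (Set Q))ᵐᵒᵖ :=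
  Finite.of_equiv (Set Q → Set Q) MulOpposite.opEquiv

theorem card_range_eatsOp_le [Fintype Q] :
    (Set.toFinite (Set.range P.eatsOp)).toFinset.card ≤ 2 ^ (Fintype.card Q ^ 2) := by
  classical
  calc _ ≤ (Finset.univ : Finset (Q → Set Q)).card := by
        refine Finset.card_le_card_of_injOn (fun e q => e.unop {q})
          (fun _ _ => Finset.mem_univ _) ?_
        intro e₁ he₁ e₂ he₂ h
        simp only [Set.Finite.coe_toFinset] at he₁ he₂
        obtain ⟨x, rfl⟩ := he₁
        obtain ⟨y, rfl⟩ := he₂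
        replace h : ∀ q, P.eats x {q} = P.eats y {q} := congrFun h
        refine congrArg MulOpposite.op (funext fun T => ?_)
        rw [eats_eq_biUnion x T, eats_eq_biUnion y T]
        simp only [h]
    _ = 2 ^ (Fintype.card Q ^ 2) := by simp [Fintype.card_set, ← pow_mul, sq]

theorem linkedPair_of_eatsOp {α β : List Γ} (hβ : β ≠ []) (hα : P.eatsOp α = P.eatsOp (α ++ β))
    (hidem : IsIdempotentElem (P.eatsOp β)) : P.LinkedPair α β := by
  refine ⟨hβ, MulOpposite.op_injective hα, MulOpposite.op_injective ?_⟩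
  change P.eatsOp β = P.eatsOp (β ++ β)
  rw [eatsOp_append, hidem.eq]

theorem size_pos [Fintype Q] [Fintype Γ] [Fintype A] [Nonempty Q] : 0 < P.size := by
  have := Fintype.card_pos (α := Q)
  unfold PDS.size
  omega

theorem exists_monochromatic_cut [Fintype Q] [Fintype Γ] [Fintype A] [Nonempty Q] (st : ℕ → Q)
    (top : ℕ → Γ) (δ : List Γ) :
    ∃ j₁ j₂, 1 ≤ j₁ ∧ j₁ < j₂ ∧ j₂ ≤ 2 ^ (9 * 2 ^ (Fintype.card Q ^ 2)) * P.size ^ 2 ∧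
      (st (δ.length - j₁) = st (δ.length - j₂) ∧ top (δ.length - j₁) = top (δ.length - j₂)) ∧
      P.eatsOp (δ.take j₁) = P.eatsOp (δ.take j₂) ∧
      IsIdempotentElem (P.eatsOp ((δ.take j₂).drop j₁)) := by
  classical
  set S := (Set.toFinite (Set.range P.eatsOp)).toFinset
  obtain ⟨j₁, j₂, hj₁, hj₁₂, hj₂, hcol, hidem⟩ :=
    exists_monochromatic_isIdempotentElem_segment (S := S) (φ := P.eatsOp)
      (by simp only [S, Set.Finite.mem_toFinset]; rintro _ ⟨x, rfl⟩ _ ⟨y, rfl⟩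
          exact ⟨x ++ y, eatsOp_append x y⟩)
      (by simp [S]) eatsOp_nil eatsOp_append δ (t := Finset.univ ×ˢ S)
      (col := fun j => ((st (δ.length - j), top (δ.length - j)), P.eatsOp (δ.take j)))
      (by simp [S]) (by
        simpa [Finset.card_product, mul_assoc] using Nat.mul_mul_two_pow_lt
          (by unfold PDS.size; omega) (by unfold PDS.size; omega) (size_pos (P := P))
          card_range_eatsOp_le)
  simp only [Prod.mk.injEq] at hcol
  exact ⟨j₁, j₂, hj₁, hj₁₂, hj₂, hcol.1, hcol.2, hidem⟩

theorem checkpoints_self (s₀ : Q × List Γ) (st : ℕ → Q) (top : ℕ → Γ) :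
    Checkpoints P s₀ s₀ st top := by
  intro u v h hu hv
  have := congrArg List.length h
  simp only [List.length_append] at this
  have := List.length_pos_iff.2 hu
  omega

/-- The only new level is `|σ| + 1`, present when `γ` has length 2; the default of `headD` is
never used then. -/
theorem Checkpoints.finStep {s₀ : Q × List Γ} {st : ℕ → Q} {top : ℕ → Γ} {p q : Q} {Y : Γ}
    {a : A} {γ σ : List Γ} (hmem : (p, Y, a, q, γ) ∈ P.Δ) (hγ : γ.length ≤ 2)
    (h₀ : ReflTransGen P.FinStep s₀ (p, Y :: σ)) (hck : Checkpoints P s₀ (p, Y :: σ) st top) :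
    Checkpoints P s₀ (q, γ ++ σ) (Function.update st (σ.length + 1) q)
      (Function.update top (σ.length + 1) (γ.headD (top 0))) := by
  have hold : ∀ k, k ≤ σ.length → Function.update st (σ.length + 1) q k = st k ∧
      Function.update top (σ.length + 1) (γ.headD (top 0)) k = top k :=
    fun k hk => ⟨Function.update_of_ne (by omega) _ _, Function.update_of_ne (by omega) _ _⟩
  intro u v huv hu hv
  have hu1 := List.length_pos_iff.2 hu
  rcases le_or_gt v.length σ.length with hvσ | hvσ
  · obtain ⟨a', rfl, rfl⟩ := List.exists_eq_append_of_append_eq_append huv hvσ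
    obtain ⟨h₁, h₂, h₃⟩ := hck (Y :: a') v rfl (List.cons_ne_nil _ _) hv
    have hb := h₂.tail (.mk a' hmem)
    rw [(hold _ hvσ).1, (hold _ hvσ).2]
    refine ⟨h₁, hb, fun u' w hu'w hu' hw => ?_⟩
    have hu'1 := List.length_pos_iff.2 hu'
    rcases le_or_gt w.length a'.length with hwa | hwa
    · obtain ⟨b', rfl, rfl⟩ := List.exists_eq_append_of_append_eq_append hu'w hwa
      rw [(hold _ (by simp)).1, (hold _ (by simp)).2]
      exact h₃ (Y :: b') w (by simp) (List.cons_ne_nil _ _) hw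
    · obtain ⟨e, rfl, rfl⟩ := List.exists_eq_append_of_append_eq_append hu'w.symm hwa.le
      simp only [List.length_append] at hγ hwa
      obtain ⟨Z, rfl⟩ := List.length_eq_one_iff.1 (show u'.length = 1 by omega)
      rw [show (e ++ a' ++ v).length = (a' ++ v).length + 1 by simp; omega,
        Function.update_self, Function.update_self]
      simpa using hb
  · obtain ⟨e, rfl, rfl⟩ := List.exists_eq_append_of_append_eq_append huv.symm hvσ.le
    simp only [List.length_append] at hγ hvσ
    obtain ⟨Z, rfl⟩ := List.length_eq_one_iff.1 (show u.length = 1 by omega)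
    rw [show (e ++ σ).length = σ.length + 1 by simp; omega,
      Function.update_self, Function.update_self]
    refine ⟨by simpa using h₀.tail (.mk σ hmem), by simpa using ReflTransGen.refl, ?_⟩
    intro u' w h hu' hw
    have := congrArg List.length h
    simp only [List.length_append, List.length_singleton] at this
    have := List.length_pos_iff.2 hu'
    have := List.length_pos_iff.2 hw
    omega

theorem exists_checkpoints [Nonempty Γ] (hpp : P.PushPop) {s₀ s : Q × List Γ}
    (h : ReflTransGen P.FinStep s₀ s) : ∃ st top, Checkpoints P s₀ s st top := by
  induction h with
  | refl => exact ⟨fun _ => s₀.1, fun _ => Classical.arbitrary Γ, checkpoints_self _ _ _⟩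
  | tail h₀ hstep ih =>
    obtain ⟨st, top, hck⟩ := ih
    obtain ⟨σ, hmem⟩ := hstep
    exact ⟨_, _, hck.finStep hmem (hpp _ hmem) h₀⟩

theorem finReach_pump {s₀ : Q × List Γ} {p q : Q} {X : Γ} {α β γ : List Γ}
    (h₀ : ReflTransGen P.FinStep s₀ (p, X :: γ))
    (hloop : ReflTransGen P.FinStep (p, [X]) (p, X :: β))
    (hexit : ReflTransGen P.FinStep (p, [X]) (q, α)) (i : ℕ) :
    ReflTransGen P.FinStep s₀ (q, α ++ listPow β i ++ γ) := by
  have hpow : ∀ i, ReflTransGen P.FinStep s₀ (p, X :: (listPow β i ++ γ)) := by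
    intro i
    induction i with
    | zero => simpa [listPow] using h₀
    | succ i ih =>
      simpa [listPow] using ih.trans (finReach_append_right hloop (listPow β i ++ γ))
  simpa using (hpow i).trans (finReach_append_right hexit (listPow β i ++ γ))

theorem Checkpoints.pump {s₀ : Q × List Γ} {st : ℕ → Q} {top : ℕ → Γ} {q : Q}
    {α β γ : List Γ} (hck : Checkpoints P s₀ (q, α ++ β ++ γ) st top) (hα : α ≠ [])
    (hβ : β ≠ []) (hγ : s₀.2.length ≤ γ.length) (hst : st (β ++ γ).length = st γ.length)
    (htop : top (β ++ γ).length = top γ.length) (i : ℕ) :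
    ReflTransGen P.FinStep s₀ (q, α ++ listPow β i ++ γ) := by
  obtain ⟨h₀, -, hloop⟩ := hck (α ++ β) γ rfl (by simp [hα]) hγ
  obtain ⟨-, hexit, -⟩ := hck α (β ++ γ) (List.append_assoc _ _ _) hα (by simp; omega)
  have hloop := hloop α β rfl hα hβ
  rw [hst, htop] at hloop hexit
  exact finReach_pump h₀ hloop hexit i

end PDS

/-- With `F = 2^(9·2^(|Q|²)) · |P|²`: every configuration `qδ` reachable from `q₀α₀`
with `|δ| ≥ F + |α₀|` can be written as `qδ = qαβγ` where `(α, β)` is a linked pair,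
`|α|, |β| ≤ F`, and every `qαβ^iγ` is reachable from `q₀α₀`. -/
theorem stmt_7 (Q Γ A : Type) [Fintype Q] [Fintype Γ] [Fintype A]
    (P : PDS Q Γ A) (hpp : P.PushPop) (q₀ q : Q) (α₀ δ : List Γ)
    (hreach : P.Reach (q₀, Sum.inl α₀) (q, Sum.inl δ))
    (hlen : δ.length ≥ 2 ^ (9 * 2 ^ (Fintype.card Q ^ 2)) * P.size ^ 2 + α₀.length) :
    ∃ α β γ : List Γ, δ = α ++ β ++ γ ∧ P.LinkedPair α β ∧
      α.length ≤ 2 ^ (9 * 2 ^ (Fintype.card Q ^ 2)) * P.size ^ 2 ∧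
      β.length ≤ 2 ^ (9 * 2 ^ (Fintype.card Q ^ 2)) * P.size ^ 2 ∧
      ∀ i : ℕ, P.Reach (q₀, Sum.inl α₀) (q, Sum.inl (α ++ listPow β i ++ γ)) := by
  have : Nonempty Q := ⟨q⟩
  have hF : 0 < 2 ^ (9 * 2 ^ (Fintype.card Q ^ 2)) * P.size ^ 2 :=
    Nat.mul_pos (by positivity) (pow_pos PDS.size_pos _)
  have : Nonempty Γ := ⟨δ.head (List.ne_nil_of_length_pos (by omega))⟩
  obtain ⟨st, top, hck⟩ := PDS.exists_checkpoints hpp (PDS.reach_inl_iff.1 hreach)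
  obtain ⟨j₁, j₂, hj₁, hj₁₂, hj₂, hcheck, heats, hidem⟩ :=
    PDS.exists_monochromatic_cut (P := P) st top δ
  have hαβ : δ.take j₁ ++ (δ.take j₂).drop j₁ = δ.take j₂ := by
    conv_rhs => rw [← List.take_append_drop j₁ (δ.take j₂), List.take_take, min_eq_left hj₁₂.le]
  have hδ : δ = δ.take j₁ ++ (δ.take j₂).drop j₁ ++ δ.drop j₂ := by
    rw [hαβ, List.take_append_drop]
  have hβ : (δ.take j₂).drop j₁ ≠ [] := List.ne_nil_of_length_pos (by simp; omega)
  refine ⟨_, _, _, hδ, PDS.linkedPair_of_eatsOp hβ (by rw [hαβ]; exact heats) hidem,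
    by simp; omega, by simp; omega, fun i => PDS.reach_inl_iff.2 ?_⟩
  have hlevel : ((δ.take j₂).drop j₁ ++ δ.drop j₂).length = δ.length - j₁ := by simp; omega
  rw [hδ] at hck
  refine hck.pump (List.ne_nil_of_length_pos (by simp; omega)) hβ (by simp; omega) ?_ ?_ i
  · rw [hlevel, List.length_drop]; exact hcheck.1
  · rw [hlevel, List.length_drop]; exact hcheck.2
end

section
/- For every pushdown system P = (Q, Γ, A, Δ), every q ∈ Q, every α ∈ Γ*, and all stack contents γ, γ′ ∈ RegStr(Γ): if rγ ∼ rγ′ for every r ∈ eats_α(q), then qαγ ∼ qαγ′. -/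
/-!
Relate `pδγ` to `pδγ'` whenever `qα →* pδ`. While `δ` is nonempty, the top of the stack lies in
`δ`, so both sides perform the same transitions and stay related; once `δ` is emptied, `p` lies
in `eats_α(q)` and the hypothesis supplies a bisimulation. This relation, closed up under
bisimilarity, is therefore a bisimulation.
-/

namespace SC

variable {Γ : Type}

@[simp]
theorem push_nil (σ : SC Γ) : push [] σ = σ := by
  cases σ <;> rfl

theorem push_cons (X : Γ) (δ : List Γ) (σ : SC Γ) : push (X :: δ) σ = cons X (push δ σ) := by
  cases σ <;> rfl

theorem push_append (δ δ' : List Γ) (σ : SC Γ) : push (δ ++ δ') σ = push δ (push δ' σ) := by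
  cases σ
  · exact congrArg Sum.inl (List.append_assoc δ δ' _)
  · exact congrArg Sum.inr (Stream'.append_append_stream δ δ' _)

theorem cons_injective2 : Function.Injective2 (cons : Γ → SC Γ → SC Γ) := by
  rintro X X' (l | s) (l' | s') h
  · obtain ⟨rfl, rfl⟩ := List.cons.inj (Sum.inl_injective h)
    exact ⟨rfl, rfl⟩
  · cases h
  · cases h
  · obtain ⟨rfl, rfl⟩ := Stream'.cons_injective2 (Sum.inr_injective h)
    exact ⟨rfl, rfl⟩

end SC

namespace PDS

variable {Q Γ A : Type} {P : PDS Q Γ A}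

theorem Bisim.symm {s t : Q × SC Γ} (h : P.Bisim s t) : P.Bisim t s := by
  obtain ⟨R, hR, hst⟩ := h
  exact ⟨flip R, fun u v huv a => (hR v u huv a).symm, hst⟩

theorem isBisim_bisim (P : PDS Q Γ A) : P.IsBisim P.Bisim := by
  rintro s t ⟨R, hR, hst⟩ a
  refine ⟨fun s' hs' => ?_, fun t' ht' => ?_⟩
  · obtain ⟨t', ht', h'⟩ := (hR s t hst a).1 s' hs'
    exact ⟨t', ht', R, hR, h'⟩
  · obtain ⟨s', hs', h'⟩ := (hR s t hst a).2 t' ht'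
    exact ⟨s', hs', R, hR, h'⟩

/-- Bisimulation up to bisimilarity. -/
theorem isBisim_or_bisim {R : Q × SC Γ → Q × SC Γ → Prop}
    (h₁ : ∀ s t, R s t → ∀ a s', P.Step a s s' → ∃ t', P.Step a t t' ∧ (R s' t' ∨ P.Bisim s' t'))
    (h₂ : ∀ s t, R s t → ∀ a t', P.Step a t t' → ∃ s', P.Step a s s' ∧ (R s' t' ∨ P.Bisim s' t')) :
    P.IsBisim fun s t => R s t ∨ P.Bisim s t := by
  rintro s t (hR | hB) a
  · exact ⟨h₁ s t hR a, h₂ s t hR a⟩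
  · obtain ⟨hfwd, hbwd⟩ := P.isBisim_bisim s t hB a
    exact ⟨fun s' hs' => (hfwd s' hs').imp fun _ => And.imp_right Or.inr,
      fun t' ht' => (hbwd t' ht').imp fun _ => And.imp_right Or.inr⟩

theorem step_push_iff {a : A} {p : Q} {δ : List Γ} (hδ : δ ≠ []) (σ : SC Γ) (s' : Q × SC Γ) :
    P.Step a (p, SC.push δ σ) s' ↔
      ∃ p' δ', P.Step a (p, Sum.inl δ) (p', Sum.inl δ') ∧ s' = (p', SC.push δ' σ) := by
  obtain ⟨Y, δ₀, rfl⟩ := List.exists_cons_of_ne_nil hδ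
  constructor
  · rintro ⟨p₁, X, q₁, γ₁, σ₁, hmem, hs, rfl⟩
    rw [SC.push_cons] at hs
    obtain ⟨rfl, hcons⟩ := Prod.mk.inj hs
    obtain ⟨rfl, rfl⟩ := SC.cons_injective2 hcons.symm
    exact ⟨q₁, γ₁ ++ δ₀, ⟨p, X, q₁, γ₁, Sum.inl δ₀, hmem, rfl, rfl⟩, by rw [SC.push_append]⟩
  · rintro ⟨p', δ', ⟨p₁, X, q₁, γ₁, σ₁ | s₁, hmem, ⟨⟩, ⟨⟩⟩, rfl⟩
    exact ⟨p, Y, p', γ₁, SC.push δ₀ σ, hmem, by rw [SC.push_cons], by rw [SC.push_append]⟩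

def PushedFrom (P : PDS Q Γ A) (q : Q) (α : List Γ) (γ γ' : SC Γ) (s t : Q × SC Γ) : Prop :=
  ∃ p δ, P.Reach (q, Sum.inl α) (p, Sum.inl δ) ∧ s = (p, SC.push δ γ) ∧ t = (p, SC.push δ γ')

theorem PushedFrom.swap {q : Q} {α : List Γ} {γ γ' : SC Γ} {s t : Q × SC Γ}
    (h : P.PushedFrom q α γ γ' s t) : P.PushedFrom q α γ' γ t s := by
  obtain ⟨p, δ, hreach, rfl, rfl⟩ := h
  exact ⟨p, δ, hreach, rfl, rfl⟩

theorem PushedFrom.exists_step {q : Q} {α : List Γ} {γ γ' : SC Γ}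
    (hbis : ∀ r ∈ P.eats α {q}, P.Bisim (r, γ) (r, γ')) {s t : Q × SC Γ}
    (h : P.PushedFrom q α γ γ' s t) {a : A} {s' : Q × SC Γ} (hs : P.Step a s s') :
    ∃ t', P.Step a t t' ∧ (P.PushedFrom q α γ γ' s' t' ∨ P.Bisim s' t') := by
  obtain ⟨p, δ, hreach, rfl, rfl⟩ := h
  rcases eq_or_ne δ [] with rfl | hδ
  · simp only [SC.push_nil] at hs ⊢
    obtain ⟨t', ht', h'⟩ := (P.isBisim_bisim _ _ (hbis p ⟨q, rfl, hreach⟩) a).1 s' hs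
    exact ⟨t', ht', Or.inr h'⟩
  obtain ⟨p', δ', hstep, rfl⟩ := (step_push_iff hδ γ s').1 hs
  refine ⟨(p', SC.push δ' γ'), (step_push_iff hδ γ' _).2 ⟨p', δ', hstep, rfl⟩, Or.inl ?_⟩
  exact ⟨p', δ', hreach.tail ⟨a, hstep⟩, rfl, rfl⟩

end PDS

/-- If `rγ ∼ rγ'` for every `r ∈ eats_α(q)`, then `qαγ ∼ qαγ'`. -/
theorem stmt_9 (Q Γ A : Type) (P : PDS Q Γ A) (q : Q) (α : List Γ) (γ γ' : SC Γ)
    (hbis : ∀ r ∈ P.eats α {q}, P.Bisim (r, γ) (r, γ')) :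
    P.Bisim (q, SC.push α γ) (q, SC.push α γ') := by
  have hbis' : ∀ r ∈ P.eats α {q}, P.Bisim (r, γ') (r, γ) := fun r hr => (hbis r hr).symm
  refine ⟨_, PDS.isBisim_or_bisim (R := P.PushedFrom q α γ γ')
    (fun _ _ h _ _ hs => h.exists_step hbis hs) ?_, Or.inl ⟨q, α, .refl, rfl, rfl⟩⟩
  intro s t h a t' ht
  obtain ⟨s', hs', h'⟩ := h.swap.exists_step hbis' ht
  exact ⟨s', hs', h'.imp PDS.PushedFrom.swap PDS.Bisim.symm⟩
end
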